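/- The multiple polylogarithm map is an algebra morphism for the shuffle product: for all semiconvergent words w, w' in the alphabet {x,y} and every z ∈ [0,1), Li_{w ⧢ w'}(z) = Li_w(z)·Li_{w'}(z), where Li is extended linearly (the shuffle of two semiconvergent words is a linear combination of semiconvergent words). -/

import Mathlib

/-! ### Words and shuffle products -/

/-- `𝓦_Ω`: the free `ℝ`-vector space on words written in the alphabet `Ω`. -/
abbrev WAlg (Ω : Type) := List Ω →₀ ℝ

/-- The basis element of `𝓦_Ω` corresponding to a word. -/
noncomputable def wdelta {Ω : Type} (w : List Ω) : WAlg Ω := Finsupp.single w 1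

/-- The `λ`-shuffle product of two words with respect to the (semigroup) product `mul`
on `Ω`, as an element of `𝓦_Ω`.  For `lam = 1` this is the stuffle product, for
`lam = -1` the anti-stuffle product and for `lam = 0` the usual shuffle product. -/
noncomputable def shw {Ω : Type} (mul : Ω → Ω → Ω) (lam : ℝ) : List Ω → List Ω → WAlg Ω
  | [], w => wdelta w
  | a :: u, [] => wdelta (a :: u)
  | a :: u, b :: v =>
      Finsupp.mapDomain (a :: ·) (shw mul lam u (b :: v)) +
      Finsupp.mapDomain (b :: ·) (shw mul lam (a :: u) v) +
      lam • Finsupp.mapDomain (mul a b :: ·) (shw mul lam u v)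
termination_by w₁ w₂ => w₁.length + w₂.length
decreasing_by all_goals (simp; try omega)

/-! ### The alphabet `{x,y}`, iterated integrals and polylogarithms -/

/-- The two-letter alphabet `{x, y}`. -/
inductive XY : Type where
  | x : XY
  | y : XY
deriving DecidableEq

/-- `σ_x(t) = 1/t` and `σ_y(t) = 1/(1-t)`. -/
noncomputable def sigmaXY : XY → ℝ → ℝ
  | .x => fun t => 1 / t
  | .y => fun t => 1 / (1 - t)

/-- The Chen iterated integral `Ch(w)` of a word of functions, with basepoint `a`:
`Ch(∅) = 1` and `Ch((f)⊔w)(x) = ∫_a^x f(t)·Ch(w)(t) dt`. -/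
noncomputable def chenL (a : ℝ) : List (ℝ → ℝ) → ℝ → ℝ
  | [] => fun _ => 1
  | f :: fs => fun x => ∫ t in a..x, f t * chenL a fs t

/-- A word in `{x,y}` is semiconvergent if it is empty or ends with `y`. -/
def SemiWordXY (w : List XY) : Prop := ∀ a, w.getLast? = some a → a = XY.y

/-- A word in `{x,y}` is convergent if it is empty, or ends with `y` and starts with `x`. -/
def ConvWordXY (w : List XY) : Prop :=
  SemiWordXY w ∧ ∀ a, w.head? = some a → a = XY.x

/-- The single variable multiple polylogarithm of a word in `{x,y}`:
for `z ∈ (0,1)` the limit as `ε → 0⁺` of the iterated (Chen) integral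
`∫_{z ≥ t₁ ≥ ⋯ ≥ t_k ≥ ε} ∏ ω_{εᵢ}(tᵢ)`, with `Li_∅ ≡ 1` and `Li_w(0) = 0` for `w ≠ ∅`. -/
noncomputable def LiW (w : List XY) (z : ℝ) : ℝ :=
  if w = [] then 1
  else if z = 0 then 0
  else Filter.limUnder (nhdsWithin 0 (Set.Ioi 0)) fun ε => chenL ε (w.map sigmaXY) z

/-- The shuffle multiple zeta value of a (convergent) word: `ζ_⧢(w) = lim_{z→1⁻} Li_w(z)`. -/
noncomputable def zetaShW (w : List XY) : ℝ := Filter.limUnder (nhdsWithin 1 (Set.Iio 1)) (LiW w)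

/-- The linear extension of `Li` to the span of words. -/
noncomputable def LiWAlg (x : WAlg XY) (z : ℝ) : ℝ := x.sum fun w c => c • LiW w z

/-! For a basepoint `ε ∈ (0,1)`, the truncated iterated integrals `Ch_ε(w)` satisfy the shuffle
relation `Ch_ε(u ⧢ v) = Ch_ε(u)·Ch_ε(v)` on `(0,1)`: both sides vanish at `ε`, and by the
recursive definition of `⧢` and the Leibniz rule they solve the same first order differential
equation. For a semiconvergent word and `z ∈ (0,1)`, `ε ↦ Ch_ε(w)(z)` is antitone and bounded
(the last letter `y` makes `Ch_ε(w)(t) = O(t)`, which absorbs every `1/t`), so `Li_w(z)` is its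
limit as `ε → 0⁺`; since `⧢` preserves semiconvergence, the identity passes to the limit. -/

open Set Filter Topology MeasureTheory intervalIntegral

section ChenIntegral

variable {I : Set ℝ} {a : ℝ}

lemma eqOn_of_hasDerivAt_eq (hI : IsOpen I) (hI' : IsPreconnected I) {F G F' : ℝ → ℝ}
    (hF : ∀ s ∈ I, HasDerivAt F (F' s) s) (hG : ∀ s ∈ I, HasDerivAt G (F' s) s) (ha : a ∈ I)
    (hFG : F a = G a) : EqOn F G I :=
  hI.eqOn_of_deriv_eq hI' (fun s hs => (hF s hs).differentiableAt.differentiableWithinAt)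
    (fun s hs => (hG s hs).differentiableAt.differentiableWithinAt)
    (fun s hs => (hF s hs).deriv.trans (hG s hs).deriv.symm) ha hFG

lemma hasDerivAt_integral_of_continuousOn (hI : IsOpen I) (hI' : I.OrdConnected) {g : ℝ → ℝ}
    (hg : ContinuousOn g I) (ha : a ∈ I) {s : ℝ} (hs : s ∈ I) :
    HasDerivAt (fun x => ∫ t in a..x, g t) (g s) s :=
  integral_hasDerivAt_right ((hg.mono (hI'.uIcc_subset ha hs)).intervalIntegrable)
    (hg.stronglyMeasurableAtFilter hI s hs) (hg.continuousAt (hI.mem_nhds hs))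

lemma continuousOn_chenL (hI : IsOpen I) (hI' : I.OrdConnected) {fs : List (ℝ → ℝ)}
    (hfs : ∀ f ∈ fs, ContinuousOn f I) (ha : a ∈ I) : ContinuousOn (chenL a fs) I := by
  induction fs with
  | nil => exact continuousOn_const
  | cons f fs ih =>
    simp only [List.forall_mem_cons] at hfs
    exact fun s hs => (hasDerivAt_integral_of_continuousOn hI hI'
      (hfs.1.mul (ih hfs.2)) ha hs).continuousAt.continuousWithinAt

lemma hasDerivAt_chenL_cons (hI : IsOpen I) (hI' : I.OrdConnected) {f : ℝ → ℝ}
    {fs : List (ℝ → ℝ)} (hfs : ∀ g ∈ f :: fs, ContinuousOn g I) (ha : a ∈ I) {s : ℝ}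
    (hs : s ∈ I) : HasDerivAt (chenL a (f :: fs)) (f s * chenL a fs s) s := by
  simp only [List.forall_mem_cons] at hfs
  exact hasDerivAt_integral_of_continuousOn hI hI'
    (hfs.1.mul (continuousOn_chenL hI hI' hfs.2 ha)) ha hs

@[simp]
lemma chenL_cons_self (f : ℝ → ℝ) (fs : List (ℝ → ℝ)) (a : ℝ) : chenL a (f :: fs) a = 0 := by
  simp [chenL]

lemma chenL_nonneg (hI' : I.OrdConnected) {fs : List (ℝ → ℝ)}
    (hfs : ∀ f ∈ fs, ∀ t ∈ I, 0 ≤ f t) (ha : a ∈ I) {s : ℝ} (hs : s ∈ I) (has : a ≤ s) :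
    0 ≤ chenL a fs s := by
  induction fs generalizing s with
  | nil => simp [chenL]
  | cons f fs ih =>
    simp only [List.forall_mem_cons] at hfs
    refine integral_nonneg has fun t ht => ?_
    have htI : t ∈ I := hI'.out ha hs ht
    exact mul_nonneg (hfs.1 t htI) (ih hfs.2 htI ht.1)

lemma chenL_le_chenL_of_le (hI : IsOpen I) (hI' : I.OrdConnected) {fs : List (ℝ → ℝ)}
    (hcont : ∀ f ∈ fs, ContinuousOn f I) (hnonneg : ∀ f ∈ fs, ∀ t ∈ I, 0 ≤ f t)
    {a' s : ℝ} (ha' : a' ∈ I) (hs : s ∈ I) (ha'a : a' ≤ a) (has : a ≤ s) :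
    chenL a fs s ≤ chenL a' fs s := by
  induction fs generalizing s with
  | nil => simp [chenL]
  | cons f fs ih =>
    simp only [List.forall_mem_cons] at hcont hnonneg
    have ha : a ∈ I := hI'.out ha' hs ⟨ha'a, has⟩
    have hint : ∀ b ∈ I, ∀ c ∈ I, IntervalIntegrable (fun t => f t * chenL b fs t) volume c s :=
      fun b hb c hc => ((hcont.1.mul (continuousOn_chenL hI hI' hcont.2 hb)).mono
        (hI'.uIcc_subset hc hs)).intervalIntegrable
    calc ∫ t in a..s, f t * chenL a fs t
        ≤ ∫ t in a..s, f t * chenL a' fs t := by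
          refine integral_mono_on has (hint a ha a ha) (hint a' ha' a ha) fun t ht => ?_
          have htI : t ∈ I := hI'.out ha hs ht
          exact mul_le_mul_of_nonneg_left (ih hcont.2 hnonneg.2 htI ht.1) (hnonneg.1 t htI)
      _ ≤ ∫ t in a'..s, f t * chenL a' fs t := by
          refine integral_mono_interval ha'a has le_rfl ?_ (hint a' ha' a' ha')
          refine (ae_restrict_iff' measurableSet_Ioc).mpr (ae_of_all _ fun t ht => ?_)
          have htI : t ∈ I := hI'.out ha' hs (Ioc_subset_Icc_self ht)
          exact mul_nonneg (hnonneg.1 t htI) (chenL_nonneg hI' hnonneg.2 ha' htI ht.1.le)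

end ChenIntegral

section Shuffle

variable {Ω : Type} (σ : Ω → ℝ → ℝ)

noncomputable def chenLin (a : ℝ) (X : WAlg Ω) (s : ℝ) : ℝ :=
  X.sum fun w c => c * chenL a (w.map σ) s

lemma chenLin_wdelta (a s : ℝ) (w : List Ω) : chenLin σ a (wdelta w) s = chenL a (w.map σ) s := by
  simp [chenLin, wdelta]

lemma chenLin_add (a : ℝ) (X Y : WAlg Ω) :
    chenLin σ a (X + Y) = chenLin σ a X + chenLin σ a Y :=
  funext fun _ => Finsupp.sum_add_index' (fun _ => zero_mul _) fun _ _ _ => add_mul _ _ _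

lemma chenLin_mapDomain_cons (a s : ℝ) (c : Ω) (X : WAlg Ω) :
    chenLin σ a (X.mapDomain (c :: ·)) s = ∑ w ∈ X.support, X w * chenL a ((c :: w).map σ) s :=
  Finsupp.sum_mapDomain_index (fun _ => zero_mul _) fun _ _ _ => add_mul _ _ _

variable {σ} {I : Set ℝ} {a : ℝ}

lemma hasDerivAt_chenLin_mapDomain_cons (hI : IsOpen I) (hI' : I.OrdConnected)
    (hσ : ∀ c, ContinuousOn (σ c) I) (ha : a ∈ I) {s : ℝ} (hs : s ∈ I) (c : Ω) (X : WAlg Ω) :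
    HasDerivAt (chenLin σ a (X.mapDomain (c :: ·))) (σ c s * chenLin σ a X s) s := by
  have hcont : ∀ w : List Ω, ∀ f ∈ (c :: w).map σ, ContinuousOn f I := by simp [hσ]
  rw [funext (chenLin_mapDomain_cons σ a · c X), chenLin, Finsupp.sum, Finset.mul_sum]
  refine HasDerivAt.fun_sum fun w _ => ?_
  rw [mul_left_comm]
  exact (hasDerivAt_chenL_cons hI hI' (hcont w) ha hs).const_mul (X w)

lemma chenLin_shw_eq_mul (hI : IsOpen I) (hI' : I.OrdConnected)
    (hσ : ∀ c, ContinuousOn (σ c) I) (ha : a ∈ I) (mul : Ω → Ω → Ω) :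
    ∀ u v : List Ω, EqOn (chenLin σ a (shw mul 0 u v))
      (fun s => chenL a (u.map σ) s * chenL a (v.map σ) s) I
  | [], v => fun s _ => by simp [shw, chenLin_wdelta, chenL]
  | c :: u, [] => fun s _ => by simp [shw, chenLin_wdelta, chenL]
  | c :: u, d :: v => by
    have hcont : ∀ w : List Ω, ∀ f ∈ w.map σ, ContinuousOn f I := by simp [hσ]
    have ih₁ := chenLin_shw_eq_mul hI hI' hσ ha mul u (d :: v)
    have ih₂ := chenLin_shw_eq_mul hI hI' hσ ha mul (c :: u) v
    rw [shw, zero_smul, add_zero, chenLin_add]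
    refine eqOn_of_hasDerivAt_eq hI hI'.isPreconnected (fun s hs => ?_)
      (fun s hs => (hasDerivAt_chenL_cons hI hI' (hcont (c :: u)) ha hs).mul
        (hasDerivAt_chenL_cons hI hI' (hcont (d :: v)) ha hs)) ha
      (by simp [chenLin_mapDomain_cons])
    refine ((hasDerivAt_chenLin_mapDomain_cons hI hI' hσ ha hs c _).add
      (hasDerivAt_chenLin_mapDomain_cons hI hI' hσ ha hs d _)).congr_deriv ?_
    simp only [ih₁ hs, ih₂ hs, List.map_cons]
    ring
termination_by u v => u.length + v.length

end Shuffle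

section ShuffleSupport

variable {Ω : Type} (mul : Ω → Ω → Ω)

lemma length_of_mem_support_shw :
    ∀ u v p : List Ω, p ∈ (shw mul 0 u v).support → p.length = u.length + v.length
  | [], v, p, hp => by simp_all [shw, wdelta]
  | c :: u, [], p, hp => by simp_all [shw, wdelta]
  | c :: u, d :: v, p, hp => by
    classical
    rw [shw, zero_smul, add_zero] at hp
    rcases Finset.mem_union.mp (Finsupp.support_add hp) with hp | hp <;>
      obtain ⟨q, hq, rfl⟩ := Finset.mem_image.mp (Finsupp.mapDomain_support hp)
    · simp [length_of_mem_support_shw u (d :: v) q hq]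
      omega
    · simp [length_of_mem_support_shw (c :: u) v q hq]
      omega
termination_by u v => u.length + v.length

lemma shw_apply_nil (u v : List Ω) : shw mul 0 u v [] = if u = [] ∧ v = [] then 1 else 0 := by
  split_ifs with h
  · simp [h, shw, wdelta]
  · refine Finsupp.notMem_support_iff.mp fun hp => h ?_
    simpa [eq_comm] using length_of_mem_support_shw mul u v [] hp

lemma getLast?_of_mem_support_shw (P : Ω → Prop) :
    ∀ u v p : List Ω, p ∈ (shw mul 0 u v).support → (∀ c ∈ u.getLast?, P c) →
      (∀ c ∈ v.getLast?, P c) → ∀ c ∈ p.getLast?, P c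
  | [], v, p, hp, _, hv => by simp_all [shw, wdelta]
  | c :: u, [], p, hp, hu, _ => by simp_all [shw, wdelta]
  | c :: u, d :: v, p, hp, hu, hv => by
    classical
    have getLast?_tail {e : Ω} {q : List Ω} (hq : q ≠ []) {x : Ω} (hx : x ∈ (e :: q).getLast?) :
        x ∈ q.getLast? := by
      obtain ⟨q₀, q', rfl⟩ := List.exists_cons_of_ne_nil hq
      rwa [List.getLast?_cons_cons] at hx
    rw [shw, zero_smul, add_zero] at hp
    rcases Finset.mem_union.mp (Finsupp.support_add hp) with hp | hp <;>
      obtain ⟨q, hq, rfl⟩ := Finset.mem_image.mp (Finsupp.mapDomain_support hp) <;>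
      intro x hx
    · have hq0 : q ≠ [] := by
        simp [← List.length_pos_iff, length_of_mem_support_shw mul u (d :: v) q hq]
      exact getLast?_of_mem_support_shw P u (d :: v) q hq
        (fun y hy => hu y (List.mem_getLast?_cons hy)) hv x (getLast?_tail hq0 hx)
    · have hq0 : q ≠ [] := by
        simp [← List.length_pos_iff, length_of_mem_support_shw mul (c :: u) v q hq]
      exact getLast?_of_mem_support_shw P (c :: u) v q hq hu
        (fun y hy => hv y (List.mem_getLast?_cons hy)) x (getLast?_tail hq0 hx)
termination_by u v => u.length + v.length

end ShuffleSupport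

section Polylog

lemma continuousOn_sigmaXY (c : XY) : ContinuousOn (sigmaXY c) (Ioo 0 1) := by
  cases c
  · exact continuousOn_const.div continuousOn_id fun t ht => ht.1.ne'
  · exact continuousOn_const.div (continuousOn_const.sub continuousOn_id)
      fun t ht => (sub_pos.mpr ht.2).ne'

lemma sigmaXY_nonneg (c : XY) {t : ℝ} (ht : t ∈ Ioo 0 1) : 0 ≤ sigmaXY c t := by
  cases c
  · exact one_div_nonneg.mpr ht.1.le
  · exact one_div_nonneg.mpr (sub_pos.mpr ht.2).le

lemma sigmaXY_y_le {t z : ℝ} (htz : t ≤ z) (hz : z < 1) : sigmaXY .y t ≤ (1 - z)⁻¹ := by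
  simp only [sigmaXY, one_div]
  exact inv_anti₀ (sub_pos.mpr hz) (by linarith)

lemma sigmaXY_mul_self_le (c : XY) {t z : ℝ} (ht : 0 < t) (htz : t ≤ z) (hz : z < 1) :
    sigmaXY c t * t ≤ (1 - z)⁻¹ := by
  cases c
  · rw [sigmaXY, one_div_mul_cancel ht.ne']
    exact one_le_inv₀ (sub_pos.mpr hz) |>.mpr (by linarith)
  · calc sigmaXY .y t * t ≤ (1 - z)⁻¹ * 1 :=
          mul_le_mul (sigmaXY_y_le htz hz) (by linarith) ht.le (by positivity)
      _ = (1 - z)⁻¹ := mul_one _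

lemma chenL_sigmaXY_le {z ε : ℝ} (hz : z < 1) (hε : 0 < ε) :
    ∀ w : List XY, SemiWordXY w → w ≠ [] → ∀ s, ε ≤ s → s ≤ z →
      chenL ε (w.map sigmaXY) s ≤ (1 - z)⁻¹ ^ w.length * s
  | [], _, hne, _, _, _ => absurd rfl hne
  | c :: w, hw, _, s, hεs, hsz => by
    have hIcc : Icc ε s ⊆ Ioo 0 1 := fun t ht => ⟨hε.trans_le ht.1, (ht.2.trans hsz).trans_lt hz⟩
    have hintegrand : ∀ t ∈ Icc ε s,
        sigmaXY c t * chenL ε (w.map sigmaXY) t ≤ (1 - z)⁻¹ ^ (c :: w).length := by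
      intro t ht
      rcases eq_or_ne w [] with rfl | hw'
      · simpa [chenL, hw c rfl] using sigmaXY_y_le (ht.2.trans hsz) hz
      have hsemi : SemiWordXY w := fun d hd => hw d (List.mem_getLast?_cons hd)
      calc sigmaXY c t * chenL ε (w.map sigmaXY) t
          ≤ sigmaXY c t * ((1 - z)⁻¹ ^ w.length * t) :=
            mul_le_mul_of_nonneg_left (chenL_sigmaXY_le hz hε w hsemi hw' t ht.1 (ht.2.trans hsz))
              (sigmaXY_nonneg c (hIcc ht))
        _ = (1 - z)⁻¹ ^ w.length * (sigmaXY c t * t) := by ring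
        _ ≤ (1 - z)⁻¹ ^ w.length * (1 - z)⁻¹ :=
            mul_le_mul_of_nonneg_left
              (sigmaXY_mul_self_le c (hε.trans_le ht.1) (ht.2.trans hsz) hz) (by positivity)
        _ = (1 - z)⁻¹ ^ (c :: w).length := by rw [List.length_cons, pow_succ]
    have hint : IntervalIntegrable (fun t => sigmaXY c t * chenL ε (w.map sigmaXY) t) volume ε s :=
      ((continuousOn_sigmaXY c).mul (continuousOn_chenL isOpen_Ioo ordConnected_Ioo
        (by simp [continuousOn_sigmaXY]) (hIcc ⟨le_rfl, hεs⟩))).mono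
        ((uIcc_of_le hεs).symm ▸ hIcc) |>.intervalIntegrable
    calc chenL ε ((c :: w).map sigmaXY) s
        ≤ ∫ _ in ε..s, (1 - z)⁻¹ ^ (c :: w).length :=
          integral_mono_on hεs hint intervalIntegrable_const hintegrand
      _ = (1 - z)⁻¹ ^ (c :: w).length * (s - ε) := by
          rw [intervalIntegral.integral_const, smul_eq_mul, mul_comm]
      _ ≤ (1 - z)⁻¹ ^ (c :: w).length * s := by gcongr; linarith

lemma tendsto_chenL_LiW {w : List XY} (hw : SemiWordXY w) {z : ℝ} (hz : z ∈ Ioo 0 1) :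
    Tendsto (fun ε => chenL ε (w.map sigmaXY) z) (𝓝[>] 0) (𝓝 (LiW w z)) := by
  rcases eq_or_ne w [] with rfl | hne
  · simp [chenL, LiW]
  rw [LiW, if_neg hne, if_neg hz.1.ne']
  have hcont : ∀ f ∈ w.map sigmaXY, ContinuousOn f (Ioo 0 1) := by simp [continuousOn_sigmaXY]
  have hnonneg : ∀ f ∈ w.map sigmaXY, ∀ t ∈ Ioo (0 : ℝ) 1, 0 ≤ f t := by
    simpa using fun c _ t ht => sigmaXY_nonneg c ht
  have hanti : AntitoneOn (fun ε => chenL ε (w.map sigmaXY) z) (Ioo 0 z) :=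
    fun ε₁ h₁ ε₂ h₂ h₁₂ => chenL_le_chenL_of_le isOpen_Ioo ordConnected_Ioo hcont hnonneg
      ⟨h₁.1, h₁.2.trans hz.2⟩ hz h₁₂ h₂.2.le
  have hbdd : BddAbove ((fun ε => chenL ε (w.map sigmaXY) z) '' Ioo 0 z) := by
    refine ⟨(1 - z)⁻¹ ^ w.length * z, ?_⟩
    rintro _ ⟨ε, hε, rfl⟩
    exact chenL_sigmaXY_le hz.2 hε.1 w hw hne z hε.2.le le_rfl
  exact tendsto_nhds_limUnder ⟨_, hanti.tendsto_nhdsWithin_Ioo_right (nonempty_Ioo.mpr hz.1) hbdd⟩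

lemma tendsto_chenLin_LiWAlg {X : WAlg XY} (hX : ∀ w ∈ X.support, SemiWordXY w) {z : ℝ}
    (hz : z ∈ Ioo 0 1) :
    Tendsto (fun ε => chenLin sigmaXY ε X z) (𝓝[>] 0) (𝓝 (LiWAlg X z)) :=
  tendsto_finsetSum _ fun w hw => (tendsto_chenL_LiW (hX w hw) hz).const_mul (X w)

lemma LiW_zero (w : List XY) : LiW w 0 = if w = [] then 1 else 0 := by
  split_ifs with h <;> simp [LiW, h]

lemma LiWAlg_zero (X : WAlg XY) : LiWAlg X 0 = X [] := by
  simp only [LiWAlg, LiW_zero, smul_eq_mul, mul_ite, mul_one, mul_zero]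
  exact Finsupp.sum_ite_self_eq' X []

end Polylog

/-- **Statement 12** (Proposition `prop:polylogs_shuffle_mor`).
The multiple polylogarithm map is an algebra morphism for the shuffle product: for all
semiconvergent words `w, w'` and every `z ∈ [0,1)`,
`Li_{w ⧢ w'}(z) = Li_w(z)·Li_{w'}(z)`. -/
theorem statement12 (w w' : List XY) (h : SemiWordXY w) (h' : SemiWordXY w')
    (z : ℝ) (hz : z ∈ Set.Ico (0 : ℝ) 1) :
    LiWAlg (shw (fun a _ : XY => a) 0 w w') z = LiW w z * LiW w' z := by
  rcases hz.1.eq_or_lt with rfl | hz0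
  · rw [LiWAlg_zero, shw_apply_nil, LiW_zero, LiW_zero]
    by_cases hw : w = [] <;> by_cases hw' : w' = [] <;> simp [hw, hw']
  have hzI : z ∈ Ioo 0 1 := ⟨hz0, hz.2⟩
  refine tendsto_nhds_unique (tendsto_chenLin_LiWAlg (fun p hp =>
    getLast?_of_mem_support_shw _ (· = XY.y) w w' p hp h h') hzI) ?_
  refine ((tendsto_chenL_LiW h hzI).mul (tendsto_chenL_LiW h' hzI)).congr' ?_
  filter_upwards [Ioo_mem_nhdsGT hz0] with ε hε
  exact (chenLin_shw_eq_mul isOpen_Ioo ordConnected_Ioo continuousOn_sigmaXY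
    ⟨hε.1, hε.2.trans hz.2⟩ _ w w' hzI).symm
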